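/- arXiv:2309.14300 — 11 statements merged into one kernel-verified Lean document; each statement's English description precedes it below -/
import Mathlib

section
/- Let u ∈ X and let p_u ∈ Y satisfy A p_u q = B u q for all q ∈ Y (so that the operator S := B* A⁻¹ B satisfies S u v = B v p_u and ⟨S u, u⟩ = B u p_u = A p_u p_u). Then S is bounded and elliptic with constants c₂ˢ = (c₂ᴮ)² and c₁ˢ = (c₁ᴮ)²: (i) |B v p_u| ≤ (c₂ᴮ)² ‖u‖_X ‖v‖_X for all v ∈ X, and (ii) B u p_u ≥ (c₁ᴮ)² ‖u‖_X². -/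
/-- boundedness and ellipticity of `S = B* A⁻¹ B` with constants
`c₂ˢ = (c₂ᴮ)²` and `c₁ˢ = (c₁ᴮ)²`. -/
theorem stmt2
    {X Y : Type*} [NormedAddCommGroup X] [InnerProductSpace ℝ X] [CompleteSpace X]
    [NormedAddCommGroup Y] [InnerProductSpace ℝ Y] [CompleteSpace Y]
    (A : Y →L[ℝ] Y →L[ℝ] ℝ)
    (hAsym : ∀ p q : Y, A p q = A q p)
    (μ : ℝ) (hμ : 0 < μ) (hAcoer : ∀ q : Y, μ * ‖q‖ ^ 2 ≤ A q q)
    (B : X →L[ℝ] Y →L[ℝ] ℝ)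
    (c₁B c₂B : ℝ) (hc₁B : 0 < c₁B) (hc₂B : 0 < c₂B)
    (hBbdd : ∀ (v : X) (q : Y), |B v q| ≤ c₂B * ‖v‖ * Real.sqrt (A q q))
    (hBinfsup : ∀ v : X, c₁B * ‖v‖ ≤
      ⨆ q : {q : Y // q ≠ 0}, B v (q : Y) / Real.sqrt (A (q : Y) (q : Y)))
    (u : X) (p_u : Y) (hpu : ∀ q : Y, A p_u q = B u q) :
    (∀ v : X, |B v p_u| ≤ c₂B ^ 2 * ‖u‖ * ‖v‖) ∧
    c₁B ^ 2 * ‖u‖ ^ 2 ≤ B u p_u := by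
  have hAnn : ∀ q : Y, (0:ℝ) ≤ A q q := fun q =>
    le_trans (by positivity) (hAcoer q)
  -- Cauchy–Schwarz for A
  have hCS : ∀ p q : Y, (A p q) ^ 2 ≤ A p p * A q q := by
    intro p q
    have h : ∀ t : ℝ, 0 ≤ A q q * t ^ 2 + (2 * A p q) * t + A p p := by
      intro t
      have e : A (p + t • q) (p + t • q)
          = A q q * t ^ 2 + (2 * A p q) * t + A p p := by
        simp only [map_add, map_smul, ContinuousLinearMap.add_apply,
          ContinuousLinearMap.smul_apply, smul_eq_mul, hAsym q p]
        ring
      have := hAnn (p + t • q)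
      linarith [e ▸ this]
    have hd : discrim (A q q) (2 * A p q) (A p p) ≤ 0 := discrim_le_zero (fun t => by have := h t; nlinarith [this])
    rw [discrim] at hd
    nlinarith [hd]
  set s := Real.sqrt (A p_u p_u) with hs
  have hsnn : 0 ≤ s := Real.sqrt_nonneg _
  have hs2 : s ^ 2 = A p_u p_u := Real.sq_sqrt (hAnn p_u)
  have hBupu : B u p_u = A p_u p_u := (hpu p_u).symm
  -- s ≤ c₂B * ‖u‖
  have hsle : s ≤ c₂B * ‖u‖ := by
    have h1 : s ^ 2 ≤ c₂B * ‖u‖ * s := by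
      calc s ^ 2 = B u p_u := by rw [hs2, hBupu]
        _ ≤ |B u p_u| := le_abs_self _
        _ ≤ c₂B * ‖u‖ * s := hBbdd u p_u
    rcases eq_or_lt_of_le hsnn with h0 | h0
    · rw [← h0]; positivity
    · nlinarith
  constructor
  · intro v
    calc |B v p_u| ≤ c₂B * ‖v‖ * s := hBbdd v p_u
      _ ≤ c₂B * ‖v‖ * (c₂B * ‖u‖) := by
          have : 0 ≤ c₂B * ‖v‖ := by positivity
          exact mul_le_mul_of_nonneg_left hsle this
      _ = c₂B ^ 2 * ‖u‖ * ‖v‖ := by ring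
  · -- ellipticity
    have key : ∀ q : {q : Y // q ≠ 0},
        B u (q : Y) / Real.sqrt (A (q : Y) (q : Y)) ≤ s := by
      rintro ⟨q, hq⟩
      have hqpos : 0 < A q q := lt_of_lt_of_le (by
        have : 0 < ‖q‖ := norm_pos_iff.mpr hq
        positivity) (hAcoer q)
      have hsq : 0 < Real.sqrt (A q q) := Real.sqrt_pos.mpr hqpos
      rw [div_le_iff₀ hsq]
      have h1 : B u q = A p_u q := (hpu q).symm
      have h2 : |A p_u q| ≤ s * Real.sqrt (A q q) := by
        have := hCS p_u q
        have habs : |A p_u q| = Real.sqrt ((A p_u q) ^ 2) := by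
          rw [Real.sqrt_sq_eq_abs]
        rw [habs]
        calc Real.sqrt ((A p_u q) ^ 2) ≤ Real.sqrt (A p_u p_u * A q q) :=
              Real.sqrt_le_sqrt this
          _ = s * Real.sqrt (A q q) := Real.sqrt_mul (hAnn p_u) _
      calc B u q = A p_u q := h1
        _ ≤ |A p_u q| := le_abs_self _
        _ ≤ s * Real.sqrt (A q q) := h2
    have hsup : c₁B * ‖u‖ ≤ s :=
      le_trans (hBinfsup u) (Real.iSup_le key hsnn)
    have : (c₁B * ‖u‖) ^ 2 ≤ s ^ 2 := by
      have h0 : 0 ≤ c₁B * ‖u‖ := by positivity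
      nlinarith
    calc c₁B ^ 2 * ‖u‖ ^ 2 = (c₁B * ‖u‖) ^ 2 := by ring
      _ ≤ s ^ 2 := this
      _ = B u p_u := by rw [hs2, hBupu]
end

section
/- For v ∈ X let p_v ∈ Y satisfy A p_v q = B v q for all q ∈ Y, and define the energy norm ‖v‖_S := √(B v p_v) = ‖p_v‖_A. Then ‖·‖_S is equivalent to the norm of X: c₁ᴮ ‖v‖_X ≤ ‖v‖_S ≤ c₂ᴮ ‖v‖_X, i.e. (c₁ᴮ)² ‖v‖_X² ≤ B v p_v ≤ (c₂ᴮ)² ‖v‖_X². -/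
/-!
Since `B v p_v = A p_v p_v = ‖p_v‖_A²`, both bounds are statements about `‖p_v‖_A`.
As `B v q = A p_v q`, the Cauchy–Schwarz inequality for the form `A` bounds every quotient
`B v q / ‖q‖_A` by `‖p_v‖_A`, so the inf-sup condition gives `c₁ᴮ ‖v‖_X ≤ ‖p_v‖_A`.
Testing the boundedness of `B` with `q = p_v` gives `‖p_v‖_A² ≤ c₂ᴮ ‖v‖_X ‖p_v‖_A`.
-/

namespace LinearMap.BilinForm

variable {M : Type*} [AddCommGroup M] [Module ℝ M] (A : LinearMap.BilinForm ℝ M)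

theorem apply_le_sqrt_mul_sqrt (hA : ∀ x, 0 ≤ A x x) (hAsymm : ∀ x y, A x y = A y x)
    (x y : M) : A x y ≤ √(A x x) * √(A y y) := by
  have hcs : A x y ^ 2 ≤ A x x * A y y := by
    simpa only [sq, ← hAsymm x y] using A.apply_mul_apply_le_of_forall_zero_le hA x y
  calc A x y ≤ |A x y| := le_abs_self _
    _ = √(A x y ^ 2) := (Real.sqrt_sq_eq_abs _).symm
    _ ≤ √(A x x * A y y) := Real.sqrt_le_sqrt hcs
    _ = √(A x x) * √(A y y) := Real.sqrt_mul (hA x) _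

theorem iSup_apply_div_sqrt_le (hA : ∀ x, 0 ≤ A x x) (hAsymm : ∀ x y, A x y = A y x)
    (x : M) : ⨆ y : {y : M // y ≠ 0}, A x y / √(A y y) ≤ √(A x x) :=
  Real.iSup_le (fun y => div_le_of_le_mul₀ (Real.sqrt_nonneg _) (Real.sqrt_nonneg _)
    (A.apply_le_sqrt_mul_sqrt hA hAsymm x y)) (Real.sqrt_nonneg _)

end LinearMap.BilinForm

theorem le_sq_of_le_mul_sqrt {a c : ℝ} (ha : 0 ≤ a) (h : a ≤ c * √a) : a ≤ c ^ 2 := by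
  have hsq := Real.sq_sqrt ha
  nlinarith [sq_nonneg (√a - c)]

theorem stmt3_general
    {X Y : Type*} [NormedAddCommGroup X] [InnerProductSpace ℝ X]
    [NormedAddCommGroup Y] [InnerProductSpace ℝ Y]
    (A : Y →L[ℝ] Y →L[ℝ] ℝ)
    (hAsym : ∀ p q : Y, A p q = A q p)
    (μ : ℝ) (hμ : 0 < μ) (hAcoer : ∀ q : Y, μ * ‖q‖ ^ 2 ≤ A q q)
    (B : X →L[ℝ] Y →L[ℝ] ℝ)
    (c₁B c₂B : ℝ) (hc₁B : 0 < c₁B)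
    (hBbdd : ∀ (v : X) (q : Y), |B v q| ≤ c₂B * ‖v‖ * Real.sqrt (A q q))
    (hBinfsup : ∀ v : X, c₁B * ‖v‖ ≤
      ⨆ q : {q : Y // q ≠ 0}, B v (q : Y) / Real.sqrt (A (q : Y) (q : Y)))
    (v : X) (p_v : Y) (hpv : ∀ q : Y, A p_v q = B v q) :
    c₁B ^ 2 * ‖v‖ ^ 2 ≤ B v p_v ∧ B v p_v ≤ c₂B ^ 2 * ‖v‖ ^ 2 := by
  have hA : ∀ q, 0 ≤ A q q := fun q => (by positivity : 0 ≤ μ * ‖q‖ ^ 2).trans (hAcoer q)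
  have hBv : ∀ q, B v q = A p_v q := fun q => (hpv q).symm
  have hlower : c₁B * ‖v‖ ≤ √(A p_v p_v) := by
    have hinfsup := hBinfsup v
    simp only [hBv] at hinfsup
    exact hinfsup.trans
      (LinearMap.BilinForm.iSup_apply_div_sqrt_le A.toLinearMap₁₂ hA hAsym p_v)
  have hupper : A p_v p_v ≤ c₂B * ‖v‖ * √(A p_v p_v) := by
    simpa only [hBv] using (le_abs_self _).trans (hBbdd v p_v)
  rw [hBv, ← mul_pow, ← mul_pow]
  constructor
  · rw [← Real.sq_sqrt (hA p_v)]
    exact pow_le_pow_left₀ (by positivity) hlower 2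
  · exact le_sq_of_le_mul_sqrt (hA p_v) hupper

/-- the energy norm `‖v‖_S = √(B v p_v)` is equivalent to the
`X` norm: `(c₁ᴮ)² ‖v‖_X² ≤ B v p_v ≤ (c₂ᴮ)² ‖v‖_X²`. -/
theorem stmt3
    {X Y : Type*} [NormedAddCommGroup X] [InnerProductSpace ℝ X] [CompleteSpace X]
    [NormedAddCommGroup Y] [InnerProductSpace ℝ Y] [CompleteSpace Y]
    (A : Y →L[ℝ] Y →L[ℝ] ℝ)
    (hAsym : ∀ p q : Y, A p q = A q p)
    (μ : ℝ) (hμ : 0 < μ) (hAcoer : ∀ q : Y, μ * ‖q‖ ^ 2 ≤ A q q)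
    (B : X →L[ℝ] Y →L[ℝ] ℝ)
    (c₁B c₂B : ℝ) (hc₁B : 0 < c₁B) (hc₂B : 0 < c₂B)
    (hBbdd : ∀ (v : X) (q : Y), |B v q| ≤ c₂B * ‖v‖ * Real.sqrt (A q q))
    (hBinfsup : ∀ v : X, c₁B * ‖v‖ ≤
      ⨆ q : {q : Y // q ≠ 0}, B v (q : Y) / Real.sqrt (A (q : Y) (q : Y)))
    (v : X) (p_v : Y) (hpv : ∀ q : Y, A p_v q = B v q) :
    c₁B ^ 2 * ‖v‖ ^ 2 ≤ B v p_v ∧ B v p_v ≤ c₂B ^ 2 * ‖v‖ ^ 2 :=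
  stmt3_general A hAsym μ hμ hAcoer B c₁B c₂B hc₁B hBbdd hBinfsup v p_v hpv
end

section
/- (Céa's lemma for the normal-equation Galerkin scheme.) Let X_H ⊆ X be a subspace, let u ∈ X and u_H ∈ X_H, set e := u − u_H, and let p_e ∈ Y satisfy A p_e q = B e q for all q ∈ Y. Assume the Galerkin orthogonality B v_H p_e = 0 for all v_H ∈ X_H. Then for every v_H ∈ X_H, letting d := u − v_H and p_d ∈ Y satisfy A p_d q = B d q for all q ∈ Y, one has B e p_e ≤ B d p_d, i.e. ‖u − u_H‖_S ≤ ‖u − v_H‖_S for the energy quantity ‖w‖_S := √(B w p_w). -/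
/-- Céa's lemma for the normal-equation Galerkin scheme:
under the Galerkin orthogonality `B v_H p_e = 0` for all `v_H ∈ X_H`,
one has `B e p_e ≤ B d p_d`, i.e. `‖u - u_H‖_S ≤ ‖u - v_H‖_S`. -/
theorem stmt4
    {X Y : Type*} [NormedAddCommGroup X] [InnerProductSpace ℝ X] [CompleteSpace X]
    [NormedAddCommGroup Y] [InnerProductSpace ℝ Y] [CompleteSpace Y]
    (A : Y →L[ℝ] Y →L[ℝ] ℝ)
    (hAsym : ∀ p q : Y, A p q = A q p)
    (μ : ℝ) (hμ : 0 < μ) (hAcoer : ∀ q : Y, μ * ‖q‖ ^ 2 ≤ A q q)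
    (B : X →L[ℝ] Y →L[ℝ] ℝ)
    (X_H : Submodule ℝ X) (u u_H : X) (hu_H : u_H ∈ X_H)
    (p_e : Y) (hpe : ∀ q : Y, A p_e q = B (u - u_H) q)
    (hGal : ∀ v_H ∈ X_H, B v_H p_e = 0) :
    ∀ v_H ∈ X_H, ∀ p_d : Y, (∀ q : Y, A p_d q = B (u - v_H) q) →
      B (u - u_H) p_e ≤ B (u - v_H) p_d := by
  intro v_H hv_H p_d hpd
  -- B e p_e = A p_e p_e, B d p_d = A p_d p_d
  have h1 : A p_e p_e = B (u - u_H) p_e := hpe p_e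
  have h2 : A p_d p_d = B (u - v_H) p_d := hpd p_d
  -- A p_d p_e = B d p_e = B e p_e + B (u_H - v_H) p_e = B e p_e
  have hmem : u_H - v_H ∈ X_H := sub_mem hu_H hv_H
  have h3 : A p_d p_e = A p_e p_e := by
    have : B (u - v_H) p_e = B (u - u_H) p_e + B (u_H - v_H) p_e := by
      have : u - v_H = (u - u_H) + (u_H - v_H) := by abel
      rw [this, map_add]; rfl
    rw [hpd p_e, this, hGal _ hmem, add_zero, h1]
  have hco : 0 ≤ A (p_d - p_e) (p_d - p_e) := by
    have := hAcoer (p_d - p_e)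
    nlinarith [sq_nonneg ‖p_d - p_e‖]
  have hexp : A (p_d - p_e) (p_d - p_e)
      = A p_d p_d - A p_e p_d - (A p_d p_e - A p_e p_e) := by
    rw [map_sub]
    simp [ContinuousLinearMap.sub_apply, map_sub]
  have h4 : A p_e p_d = A p_d p_e := hAsym _ _
  rw [← h1, ← h2]
  nlinarith [hco, hexp, h3, h4]
end

section
/- Let X_H ⊆ X and Y_h ⊆ Y be subspaces and assume the discrete inf-sup stability condition with constant c_S > 0: c_S ‖v_H‖_X ≤ sup_{0 ≠ q_h ∈ Y_h} (B v_H q_h)/‖q_h‖_A for all v_H ∈ X_H. For v_H ∈ X_H let p_{v_H h} ∈ Y_h satisfy A p_{v_H h} q_h = B v_H q_h for all q_h ∈ Y_h. Then the approximate operator S̃ is discrete elliptic on X_H: ⟨S̃ v_H, v_H⟩ = B v_H p_{v_H h} ≥ (c_S)² ‖v_H‖_X² for all v_H ∈ X_H. -/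
private lemma csA {Y : Type*} [NormedAddCommGroup Y] [InnerProductSpace ℝ Y]
    (A : Y →L[ℝ] Y →L[ℝ] ℝ)
    (hAsym : ∀ p q : Y, A p q = A q p)
    (μ : ℝ) (hμ : 0 < μ) (hAcoer : ∀ q : Y, μ * ‖q‖ ^ 2 ≤ A q q)
    (p q : Y) : (A p q) ^ 2 ≤ A p p * A q q := by
  have hnn : ∀ r : Y, 0 ≤ A r r := fun r =>
    le_trans (by positivity) (hAcoer r)
  have h : ∀ t : ℝ, 0 ≤ A q q * (t * t) + 2 * A p q * t + A p p := by
    intro t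
    have h0 := hnn (p + t • q)
    have hexp : A (p + t • q) (p + t • q)
        = A q q * (t * t) + 2 * A p q * t + A p p := by
      simp only [map_add, map_smul, ContinuousLinearMap.add_apply,
        ContinuousLinearMap.smul_apply, smul_eq_mul]
      rw [hAsym q p]; ring
    linarith [hexp ▸ h0]
  have hd := discrim_le_zero h
  rw [discrim] at hd
  nlinarith [hd]

/-- discrete ellipticity of the approximate operator `S̃` on `X_H`
under the discrete inf-sup condition:
`⟨S̃ v_H, v_H⟩ = B v_H p_{v_H h} ≥ (c_S)² ‖v_H‖_X²`. -/
theorem stmt7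
    {X Y : Type*} [NormedAddCommGroup X] [InnerProductSpace ℝ X] [CompleteSpace X]
    [NormedAddCommGroup Y] [InnerProductSpace ℝ Y] [CompleteSpace Y]
    (A : Y →L[ℝ] Y →L[ℝ] ℝ)
    (hAsym : ∀ p q : Y, A p q = A q p)
    (μ : ℝ) (hμ : 0 < μ) (hAcoer : ∀ q : Y, μ * ‖q‖ ^ 2 ≤ A q q)
    (B : X →L[ℝ] Y →L[ℝ] ℝ)
    (X_H : Submodule ℝ X) (Y_h : Submodule ℝ Y)
    (c_S : ℝ) (hcS : 0 < c_S)
    (hinfsup : ∀ v_H ∈ X_H, c_S * ‖v_H‖ ≤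
      ⨆ q : {q : Y // q ∈ Y_h ∧ q ≠ 0},
        B v_H (q : Y) / Real.sqrt (A (q : Y) (q : Y))) :
    ∀ v_H ∈ X_H, ∀ p : Y, p ∈ Y_h →
      (∀ q_h ∈ Y_h, A p q_h = B v_H q_h) →
      c_S ^ 2 * ‖v_H‖ ^ 2 ≤ B v_H p := by
  intro v hv p hp hgal
  have hnn : ∀ r : Y, 0 ≤ A r r := fun r =>
    le_trans (by positivity) (hAcoer r)
  have hBp : B v p = A p p := (hgal p hp).symm
  have hsupb : (⨆ q : {q : Y // q ∈ Y_h ∧ q ≠ 0},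
      B v (q : Y) / Real.sqrt (A (q : Y) (q : Y))) ≤ Real.sqrt (A p p) := by
    by_cases hne : Nonempty {q : Y // q ∈ Y_h ∧ q ≠ 0}
    · apply ciSup_le
      intro ⟨q, hqY, hq0⟩
      have hqq : 0 < A q q := by
        have := hAcoer q
        have : (0:ℝ) < μ * ‖q‖ ^ 2 := by
          have : 0 < ‖q‖ := norm_pos_iff.mpr hq0
          positivity
        linarith [hAcoer q]
      have hsq : 0 < Real.sqrt (A q q) := Real.sqrt_pos.mpr hqq
      rw [div_le_iff₀ hsq]
      have hcs := csA A hAsym μ hμ hAcoer p q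
      have hBq : B v q = A p q := (hgal q hqY).symm
      rw [hBq]
      calc A p q ≤ |A p q| := le_abs_self _
        _ = Real.sqrt ((A p q) ^ 2) := (Real.sqrt_sq_eq_abs _).symm
        _ ≤ Real.sqrt (A p p * A q q) := Real.sqrt_le_sqrt hcs
        _ = Real.sqrt (A p p) * Real.sqrt (A q q) := Real.sqrt_mul (hnn p) _
    · rw [not_nonempty_iff] at hne
      rw [Real.iSup_of_isEmpty]
      exact Real.sqrt_nonneg _
  have hkey : c_S * ‖v‖ ≤ Real.sqrt (A p p) := le_trans (hinfsup v hv) hsupb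
  have h1 : (c_S * ‖v‖) ^ 2 ≤ Real.sqrt (A p p) ^ 2 := by
    apply sq_le_sq' _ hkey
    nlinarith [norm_nonneg v, Real.sqrt_nonneg (A p p)]
  rw [Real.sq_sqrt (hnn p)] at h1
  rw [hBp]
  nlinarith [h1]
end

section
/- (Strang-type a priori estimate.) Let X_H ⊆ X and Y_h ⊆ Y be closed subspaces satisfying the discrete inf-sup condition with constant c_S > 0: c_S ‖v_H‖_X ≤ sup_{0 ≠ q_h ∈ Y_h} (B v_H q_h)/‖q_h‖_A for all v_H ∈ X_H. Let f ∈ Y* and u ∈ X satisfy B u q = f q for all q ∈ Y. Let p_u, p_f ∈ Y satisfy A p_u q = B u q and A p_f q = f q for all q ∈ Y, and let p_{fh} ∈ Y_h satisfy A p_{fh} q_h = f q_h for all q_h ∈ Y_h. For each w ∈ X let P_h w ∈ Y_h denote the unique element with A (P_h w) q_h = B w q_h for all q_h ∈ Y_h, and let ũ_H ∈ X_H satisfy the perturbed Galerkin equations B v_H (P_h ũ_H) = B v_H p_{fh} for all v_H ∈ X_H. Then for all v_H ∈ X_H and all q_h, r_h ∈ Y_h: ‖u − ũ_H‖_X ≤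 (1 + 2 (c₂ᴮ)²/(c_S)²) · (c₂ᴮ/c₁ᴮ) · ‖u − v_H‖_X + (c₂ᴮ/(c_S)²) · (‖p_u − q_h‖_A + ‖p_f − r_h‖_A). -/
lemma auxCS {Y : Type*} [NormedAddCommGroup Y] [NormedSpace ℝ Y]
    (A : Y →L[ℝ] Y →L[ℝ] ℝ)
    (hAsym : ∀ p q : Y, A p q = A q p)
    (μ : ℝ) (hμ : 0 < μ) (hAcoer : ∀ q : Y, μ * ‖q‖ ^ 2 ≤ A q q)
    (p q : Y) : A p q ≤ Real.sqrt (A p p) * Real.sqrt (A q q) := by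
  have hA0 : ∀ r : Y, 0 ≤ A r r := fun r => le_trans (by positivity) (hAcoer r)
  have hsq : (A p q) ^ 2 ≤ A p p * A q q := by
    rcases eq_or_ne q 0 with hq | hq
    · simp [hq]
    · have hpos : 0 < A q q :=
        lt_of_lt_of_le (mul_pos hμ (pow_pos (norm_pos_iff.mpr hq) 2)) (hAcoer q)
      have h1 := hA0 (A q q • p - A p q • q)
      simp only [map_sub, map_smul, ContinuousLinearMap.sub_apply,
        ContinuousLinearMap.smul_apply, smul_eq_mul] at h1
      rw [hAsym q p] at h1
      have h2 : 0 ≤ A q q * (A q q * A p p - A p q ^ 2) := by nlinarith [h1]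
      nlinarith [h2, hpos]
  calc A p q ≤ |A p q| := le_abs_self _
    _ = Real.sqrt ((A p q) ^ 2) := (Real.sqrt_sq_eq_abs _).symm
    _ ≤ Real.sqrt (A p p * A q q) := Real.sqrt_le_sqrt hsq
    _ = _ := Real.sqrt_mul (hA0 p) _

lemma auxTri {Y : Type*} [NormedAddCommGroup Y] [NormedSpace ℝ Y]
    (A : Y →L[ℝ] Y →L[ℝ] ℝ)
    (hAsym : ∀ p q : Y, A p q = A q p)
    (μ : ℝ) (hμ : 0 < μ) (hAcoer : ∀ q : Y, μ * ‖q‖ ^ 2 ≤ A q q)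
    (x y : Y) :
    Real.sqrt (A (x + y) (x + y)) ≤ Real.sqrt (A x x) + Real.sqrt (A y y) := by
  have hA0 : ∀ r : Y, 0 ≤ A r r := fun r => le_trans (by positivity) (hAcoer r)
  have hcs := auxCS A hAsym μ hμ hAcoer x y
  have hexp : A (x + y) (x + y) = A x x + 2 * A x y + A y y := by
    simp only [map_add, ContinuousLinearMap.add_apply]
    rw [hAsym y x]; ring
  have hx := Real.sq_sqrt (hA0 x)
  have hy := Real.sq_sqrt (hA0 y)
  have h1 : A (x + y) (x + y) ≤ (Real.sqrt (A x x) + Real.sqrt (A y y)) ^ 2 := by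
    rw [hexp]; nlinarith [Real.sqrt_nonneg (A x x), Real.sqrt_nonneg (A y y)]
  calc Real.sqrt (A (x + y) (x + y))
      ≤ Real.sqrt ((Real.sqrt (A x x) + Real.sqrt (A y y)) ^ 2) := Real.sqrt_le_sqrt h1
    _ = _ := Real.sqrt_sq (by positivity)

lemma auxDiv {Y : Type*} [NormedAddCommGroup Y] [NormedSpace ℝ Y]
    (A : Y →L[ℝ] Y →L[ℝ] ℝ)
    (μ : ℝ) (hμ : 0 < μ) (hAcoer : ∀ q : Y, μ * ‖q‖ ^ 2 ≤ A q q)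
    (d : Y) (c : ℝ) (hc : 0 ≤ c) (h : A d d ≤ c * Real.sqrt (A d d)) :
    Real.sqrt (A d d) ≤ c := by
  have hA0 : (0:ℝ) ≤ A d d := le_trans (by positivity) (hAcoer d)
  have hs : Real.sqrt (A d d) ^ 2 = A d d := Real.sq_sqrt hA0
  nlinarith [Real.sqrt_nonneg (A d d)]


set_option maxHeartbeats 1000000 in

/-- Strang-type a priori estimate for the perturbed Galerkin scheme:
`‖u − ũ_H‖_X ≤ (1 + 2(c₂ᴮ)²/(c_S)²)(c₂ᴮ/c₁ᴮ)‖u − v_H‖_X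
  + (c₂ᴮ/(c_S)²)(‖p_u − q_h‖_A + ‖p_f − r_h‖_A)`. -/
theorem stmt8
    {X Y : Type*} [NormedAddCommGroup X] [InnerProductSpace ℝ X] [CompleteSpace X]
    [NormedAddCommGroup Y] [InnerProductSpace ℝ Y] [CompleteSpace Y]
    (A : Y →L[ℝ] Y →L[ℝ] ℝ)
    (hAsym : ∀ p q : Y, A p q = A q p)
    (μ : ℝ) (hμ : 0 < μ) (hAcoer : ∀ q : Y, μ * ‖q‖ ^ 2 ≤ A q q)
    (B : X →L[ℝ] Y →L[ℝ] ℝ)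
    (c₁B c₂B : ℝ) (hc₁B : 0 < c₁B) (hc₂B : 0 < c₂B)
    (hBbdd : ∀ (v : X) (q : Y), |B v q| ≤ c₂B * ‖v‖ * Real.sqrt (A q q))
    (hBinfsup : ∀ v : X, c₁B * ‖v‖ ≤
      ⨆ q : {q : Y // q ≠ 0}, B v (q : Y) / Real.sqrt (A (q : Y) (q : Y)))
    (X_H : Submodule ℝ X) (Y_h : Submodule ℝ Y)
    (hXHclosed : IsClosed (X_H : Set X)) (hYhclosed : IsClosed (Y_h : Set Y))
    (c_S : ℝ) (hcS : 0 < c_S)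
    (hinfsup : ∀ v_H ∈ X_H, c_S * ‖v_H‖ ≤
      ⨆ q : {q : Y // q ∈ Y_h ∧ q ≠ 0},
        B v_H (q : Y) / Real.sqrt (A (q : Y) (q : Y)))
    (f : Y →L[ℝ] ℝ) (u : X) (hu : ∀ q : Y, B u q = f q)
    (p_u p_f : Y)
    (hpu : ∀ q : Y, A p_u q = B u q)
    (hpf : ∀ q : Y, A p_f q = f q)
    (p_fh : Y) (hpfhmem : p_fh ∈ Y_h)
    (hpfh : ∀ q_h ∈ Y_h, A p_fh q_h = f q_h)
    (P : X → Y) (hPmem : ∀ w : X, P w ∈ Y_h)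
    (hP : ∀ w : X, ∀ q_h ∈ Y_h, A (P w) q_h = B w q_h)
    (uH : X) (huHmem : uH ∈ X_H)
    (huH : ∀ v_H ∈ X_H, B v_H (P uH) = B v_H p_fh) :
    ∀ v_H ∈ X_H, ∀ q_h ∈ Y_h, ∀ r_h ∈ Y_h,
      ‖u - uH‖ ≤ (1 + 2 * c₂B ^ 2 / c_S ^ 2) * (c₂B / c₁B) * ‖u - v_H‖ +
        (c₂B / c_S ^ 2) * (Real.sqrt (A (p_u - q_h) (p_u - q_h)) +
          Real.sqrt (A (p_f - r_h) (p_f - r_h))) := by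
  intro v_H hvH q_h hqh r_h hrh
  have hA0 : ∀ r : Y, 0 ≤ A r r := fun r => le_trans (by positivity) (hAcoer r)
  have hsqrtpos : ∀ r : Y, r ≠ 0 → 0 < Real.sqrt (A r r) := fun r hr =>
    Real.sqrt_pos.mpr
      (lt_of_lt_of_le (mul_pos hμ (pow_pos (norm_pos_iff.mpr hr) 2)) (hAcoer r))
  -- P u = p_fh
  have hPu : P u = p_fh := by
    have hd : (P u - p_fh) ∈ Y_h := Submodule.sub_mem _ (hPmem u) hpfhmem
    have h0 : A (P u - p_fh) (P u - p_fh) = 0 := by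
      have e1 : A (P u - p_fh) (P u - p_fh) =
          A (P u) (P u - p_fh) - A p_fh (P u - p_fh) := by
        simp only [map_sub, ContinuousLinearMap.sub_apply]; try ring
      rw [e1, hP u _ hd, hpfh _ hd, hu]
      ring
    have h1 := hAcoer (P u - p_fh)
    have h2 : ‖P u - p_fh‖ ^ 2 ≤ 0 := by nlinarith
    have h3 : ‖P u - p_fh‖ ^ 2 = 0 := le_antisymm h2 (sq_nonneg _)
    have h4 : P u - p_fh = 0 := by
      simpa using pow_eq_zero_iff (two_ne_zero) |>.mp h3
    exact sub_eq_zero.mp h4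
  -- Galerkin orthogonality
  have hGal : ∀ w ∈ X_H, B w (P u - P uH) = 0 := by
    intro w hw
    rw [map_sub, hPu, huH w hw]
    ring
  -- bound on ‖P u - P uH‖_A
  have hdY : (P u - P uH) ∈ Y_h := Submodule.sub_mem _ (hPmem u) (hPmem uH)
  have h5 : Real.sqrt (A (P u - P uH) (P u - P uH)) ≤ c₂B * ‖u - v_H‖ := by
    refine auxDiv A μ hμ hAcoer _ _ (by positivity) ?_
    have e1 : A (P u - P uH) (P u - P uH) = B (u - v_H) (P u - P uH) := by
      have e2 : A (P u - P uH) (P u - P uH) =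
          A (P u) (P u - P uH) - A (P uH) (P u - P uH) := by
        simp only [map_sub, ContinuousLinearMap.sub_apply]; try ring
      have e3 : B (u - v_H) (P u - P uH) = B u (P u - P uH) - B v_H (P u - P uH) := by
        simp only [map_sub, ContinuousLinearMap.sub_apply]; try ring
      have e4 : B (v_H - uH) (P u - P uH) = B v_H (P u - P uH) - B uH (P u - P uH) := by
        simp only [map_sub, ContinuousLinearMap.sub_apply]; try ring
      have e5 : B (v_H - uH) (P u - P uH) = 0 :=
        hGal (v_H - uH) (Submodule.sub_mem _ hvH huHmem)
      rw [e2, hP u _ hdY, hP uH _ hdY]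
      linarith
    calc A (P u - P uH) (P u - P uH) = B (u - v_H) (P u - P uH) := e1
      _ ≤ |B (u - v_H) (P u - P uH)| := le_abs_self _
      _ ≤ c₂B * ‖u - v_H‖ * Real.sqrt (A (P u - P uH) (P u - P uH)) := hBbdd _ _
  -- bound on ‖P v_H - P u‖_A
  have heY : (P v_H - P u) ∈ Y_h := Submodule.sub_mem _ (hPmem v_H) (hPmem u)
  have h6 : Real.sqrt (A (P v_H - P u) (P v_H - P u)) ≤ c₂B * ‖u - v_H‖ := by
    refine auxDiv A μ hμ hAcoer _ _ (by positivity) ?_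
    have e1 : A (P v_H - P u) (P v_H - P u) = B (v_H - u) (P v_H - P u) := by
      have e2 : A (P v_H - P u) (P v_H - P u) =
          A (P v_H) (P v_H - P u) - A (P u) (P v_H - P u) := by
        simp only [map_sub, ContinuousLinearMap.sub_apply]; try ring
      have e3 : B (v_H - u) (P v_H - P u) = B v_H (P v_H - P u) - B u (P v_H - P u) := by
        simp only [map_sub, ContinuousLinearMap.sub_apply]; try ring
      rw [e2, hP v_H _ heY, hP u _ heY]
      linarith
    calc A (P v_H - P u) (P v_H - P u) = B (v_H - u) (P v_H - P u) := e1
      _ ≤ |B (v_H - u) (P v_H - P u)| := le_abs_self _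
      _ ≤ c₂B * ‖v_H - u‖ * Real.sqrt (A (P v_H - P u) (P v_H - P u)) := hBbdd _ _
      _ = c₂B * ‖u - v_H‖ * Real.sqrt (A (P v_H - P u) (P v_H - P u)) := by
        rw [norm_sub_rev]
  -- discrete inf-sup step
  have h7 : c_S * ‖v_H - uH‖ ≤ Real.sqrt (A (P v_H - P uH) (P v_H - P uH)) := by
    refine (hinfsup (v_H - uH) (Submodule.sub_mem _ hvH huHmem)).trans ?_
    apply Real.iSup_le _ (Real.sqrt_nonneg _)
    rintro ⟨s, hsY, hs0⟩
    simp only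
    rw [div_le_iff₀ (hsqrtpos s hs0)]
    have e1 : B (v_H - uH) s = A (P v_H - P uH) s := by
      simp only [map_sub, ContinuousLinearMap.sub_apply]
      rw [hP v_H s hsY, hP uH s hsY]
    rw [e1]
    exact auxCS A hAsym μ hμ hAcoer _ s
  have h7b : Real.sqrt (A (P v_H - P uH) (P v_H - P uH)) ≤
      Real.sqrt (A (P v_H - P u) (P v_H - P u)) +
      Real.sqrt (A (P u - P uH) (P u - P uH)) := by
    have := auxTri A hAsym μ hμ hAcoer (P v_H - P u) (P u - P uH)
    rwa [sub_add_sub_cancel] at this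
  have hEkey : c_S * ‖v_H - uH‖ ≤ 2 * c₂B * ‖u - v_H‖ := by
    have := h7.trans h7b
    linarith
  -- c₁B ≤ c₂B when ‖u - v_H‖ > 0
  have hc12 : 0 < ‖u - v_H‖ → c₁B ≤ c₂B := by
    intro hD
    have h := hBinfsup (u - v_H)
    rcases isEmpty_or_nonempty {q : Y // q ≠ 0} with hNE | hNE
    · rw [Real.iSup_of_isEmpty _] at h
      nlinarith
    · have h2 : (⨆ q : {q : Y // q ≠ 0},
          B (u - v_H) (q : Y) / Real.sqrt (A (q : Y) (q : Y))) ≤ c₂B * ‖u - v_H‖ := by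
        apply Real.iSup_le _ (by positivity)
        rintro ⟨s, hs0⟩
        simp only
        rw [div_le_iff₀ (hsqrtpos s hs0)]
        calc B (u - v_H) s ≤ |B (u - v_H) s| := le_abs_self _
          _ ≤ c₂B * ‖u - v_H‖ * Real.sqrt (A s s) := hBbdd _ _
      exact le_of_mul_le_mul_right (h.trans h2) hD
  -- c_S ≤ c₂B when ‖v_H - uH‖ > 0
  have hcS2 : 0 < ‖v_H - uH‖ → c_S ≤ c₂B := by
    intro hE
    have h := hinfsup (v_H - uH) (Submodule.sub_mem _ hvH huHmem)
    rcases isEmpty_or_nonempty {q : Y // q ∈ Y_h ∧ q ≠ 0} with hNE | hNE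
    · rw [Real.iSup_of_isEmpty _] at h
      nlinarith
    · have h2 : (⨆ q : {q : Y // q ∈ Y_h ∧ q ≠ 0},
          B (v_H - uH) (q : Y) / Real.sqrt (A (q : Y) (q : Y))) ≤ c₂B * ‖v_H - uH‖ := by
        apply Real.iSup_le _ (by positivity)
        rintro ⟨s, hsY, hs0⟩
        simp only
        rw [div_le_iff₀ (hsqrtpos s hs0)]
        calc B (v_H - uH) s ≤ |B (v_H - uH) s| := le_abs_self _
          _ ≤ c₂B * ‖v_H - uH‖ * Real.sqrt (A s s) := hBbdd _ _
      exact le_of_mul_le_mul_right (h.trans h2) hE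
  -- final arithmetic
  have htri : ‖u - uH‖ ≤ ‖u - v_H‖ + ‖v_H - uH‖ := by
    calc ‖u - uH‖ = ‖(u - v_H) + (v_H - uH)‖ := by rw [sub_add_sub_cancel]
      _ ≤ _ := norm_add_le _ _
  have hD0 : 0 ≤ ‖u - v_H‖ := norm_nonneg _
  have hE0 : 0 ≤ ‖v_H - uH‖ := norm_nonneg _
  have hextra : 0 ≤ (c₂B / c_S ^ 2) * (Real.sqrt (A (p_u - q_h) (p_u - q_h)) +
      Real.sqrt (A (p_f - r_h) (p_f - r_h))) := by positivity
  have hmain : ‖u - v_H‖ + ‖v_H - uH‖ ≤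
      (1 + 2 * c₂B ^ 2 / c_S ^ 2) * (c₂B / c₁B) * ‖u - v_H‖ := by
    rcases eq_or_lt_of_le hD0 with hD | hD
    · have hE1 : c_S * ‖v_H - uH‖ ≤ 0 := by rw [← hD] at hEkey; linarith
      have hE2 : ‖v_H - uH‖ ≤ 0 := by nlinarith
      have hE3 : ‖v_H - uH‖ = 0 := le_antisymm hE2 hE0
      rw [← hD, hE3]
      ring_nf
      positivity
    · have hs1 : c₁B ≤ c₂B := hc12 hD
      have hb : (1:ℝ) ≤ c₂B / c₁B := (one_le_div hc₁B).mpr hs1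
      rcases eq_or_lt_of_le hE0 with hE' | hE'
    -- E = 0 case
      · rw [← hE']
        have h2 : 0 ≤ 2 * c₂B ^ 2 / c_S ^ 2 := by positivity
        have h3 : (1:ℝ) ≤ (1 + 2 * c₂B ^ 2 / c_S ^ 2) * (c₂B / c₁B) := by
          nlinarith [mul_nonneg h2 (le_trans zero_le_one hb)]
        have h4 := mul_le_mul_of_nonneg_right h3 hD0
        linarith
      · have ht1 : c_S ≤ c₂B := hcS2 hE'
        have ha : (1:ℝ) ≤ c₂B / c_S := (one_le_div hcS).mpr ht1
        have hEb : ‖v_H - uH‖ ≤ 2 * c₂B / c_S * ‖u - v_H‖ := by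
          rw [div_mul_eq_mul_div, le_div_iff₀ hcS]
          nlinarith
        have hco : 1 + 2 * c₂B / c_S ≤ (1 + 2 * c₂B ^ 2 / c_S ^ 2) * (c₂B / c₁B) := by
          have hrw : 1 + 2 * c₂B ^ 2 / c_S ^ 2 = 1 + 2 * (c₂B / c_S) ^ 2 := by
            rw [div_pow]; ring
          have hrw2 : 1 + 2 * c₂B / c_S = 1 + 2 * (c₂B / c_S) := by ring
          rw [hrw, hrw2]
          have f1 : 1 + 2 * (c₂B / c_S) ^ 2 ≤ (1 + 2 * (c₂B / c_S) ^ 2) * (c₂B / c₁B) :=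
            le_mul_of_one_le_right (by positivity) hb
          have f2 : c₂B / c_S ≤ (c₂B / c_S) ^ 2 := by nlinarith
          linarith
        calc ‖u - v_H‖ + ‖v_H - uH‖ ≤ ‖u - v_H‖ + 2 * c₂B / c_S * ‖u - v_H‖ := by
              linarith
          _ = (1 + 2 * c₂B / c_S) * ‖u - v_H‖ := by ring
          _ ≤ _ := mul_le_mul_of_nonneg_right hco hD0
  linarith
end

section
/- (Efficiency of the error estimator.) Let X_H ⊆ X and Y_h ⊆ Y be subspaces, let f ∈ Y*, and let u ∈ X satisfy B u q = f q for all q ∈ Y. Let (ũ_H, p_h) ∈ X_H × Y_h be a discrete saddle-point solution, i.e. A p_h q_h + B ũ_H q_h = f q_h for all q_h ∈ Y_h and B v_H p_h = 0 for all v_H ∈ X_H. Let e ∈ Y satisfy A e q = B (u − ũ_H) q for all q ∈ Y. Then ‖p_h‖_A ≤ ‖e‖_A ≤ c₂ᴮ ‖u − ũ_H‖_X, i.e. the estimator ‖p_h‖_A is bounded by the energy error ‖u − ũ_H‖_S = ‖e‖_A and by c₂ᴮ times the X-norm error. -/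
/-- Cauchy–Schwarz for a symmetric nonnegative bilinear form. -/
lemma aux_cs {Y : Type*} [NormedAddCommGroup Y] [InnerProductSpace ℝ Y]
    (A : Y →L[ℝ] Y →L[ℝ] ℝ)
    (hAsym : ∀ p q : Y, A p q = A q p)
    (hpos : ∀ q : Y, 0 ≤ A q q) (x y : Y) :
    A x y ≤ Real.sqrt (A x x) * Real.sqrt (A y y) := by
  have hq : ∀ t : ℝ, 0 ≤ A y y * (t * t) + (2 * A x y) * t + A x x := by
    intro t
    have h := hpos (x + t • y)
    have : A (x + t • y) (x + t • y)
        = A y y * (t * t) + (2 * A x y) * t + A x x := by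
      simp [map_add, map_smul, hAsym y x]
      ring
    rw [this] at h; exact h
  have hd : discrim (A y y) (2 * A x y) (A x x) ≤ 0 := discrim_le_zero hq
  have hsq : (A x y) ^ 2 ≤ A x x * A y y := by
    unfold discrim at hd; nlinarith
  calc A x y ≤ |A x y| := le_abs_self _
    _ = Real.sqrt ((A x y) ^ 2) := (Real.sqrt_sq_eq_abs _).symm
    _ ≤ Real.sqrt (A x x * A y y) := Real.sqrt_le_sqrt hsq
    _ = Real.sqrt (A x x) * Real.sqrt (A y y) :=
        Real.sqrt_mul (hpos x) _

/-- efficiency of the error estimator: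
`‖p_h‖_A ≤ ‖e‖_A ≤ c₂ᴮ ‖u − ũ_H‖_X`, where `e = A⁻¹ B (u − ũ_H)`
realizes the energy error `‖u − ũ_H‖_S`. -/
theorem stmt9
    {X Y : Type*} [NormedAddCommGroup X] [InnerProductSpace ℝ X] [CompleteSpace X]
    [NormedAddCommGroup Y] [InnerProductSpace ℝ Y] [CompleteSpace Y]
    (A : Y →L[ℝ] Y →L[ℝ] ℝ)
    (hAsym : ∀ p q : Y, A p q = A q p)
    (μ : ℝ) (hμ : 0 < μ) (hAcoer : ∀ q : Y, μ * ‖q‖ ^ 2 ≤ A q q)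
    (B : X →L[ℝ] Y →L[ℝ] ℝ)
    (c₂B : ℝ) (hc₂B : 0 < c₂B)
    (hBbdd : ∀ (v : X) (q : Y), |B v q| ≤ c₂B * ‖v‖ * Real.sqrt (A q q))
    (X_H : Submodule ℝ X) (Y_h : Submodule ℝ Y)
    (f : Y →L[ℝ] ℝ) (u : X) (hu : ∀ q : Y, B u q = f q)
    (uH : X) (huHmem : uH ∈ X_H) (p_h : Y) (hphmem : p_h ∈ Y_h)
    (heq1 : ∀ q_h ∈ Y_h, A p_h q_h + B uH q_h = f q_h)
    (heq2 : ∀ v_H ∈ X_H, B v_H p_h = 0)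
    (e : Y) (he : ∀ q : Y, A e q = B (u - uH) q) :
    Real.sqrt (A p_h p_h) ≤ Real.sqrt (A e e) ∧
    Real.sqrt (A e e) ≤ c₂B * ‖u - uH‖ := by
  have hpos : ∀ q : Y, 0 ≤ A q q := fun q =>
    le_trans (by positivity) (hAcoer q)
  have hBuH : B uH p_h = 0 := heq2 uH huHmem
  have h1 : A p_h p_h = A e p_h := by
    have := heq1 p_h hphmem
    have h2 := he p_h
    have h3 := hu p_h
    simp [map_sub] at h2
    linarith
  constructor
  · -- first inequality
    have hcs : A e p_h ≤ Real.sqrt (A e e) * Real.sqrt (A p_h p_h) :=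
      aux_cs A hAsym hpos e p_h
    rcases eq_or_lt_of_le (Real.sqrt_nonneg (A p_h p_h)) with h0 | h0
    · rw [← h0]; exact Real.sqrt_nonneg _
    · have : Real.sqrt (A p_h p_h) * Real.sqrt (A p_h p_h)
          ≤ Real.sqrt (A e e) * Real.sqrt (A p_h p_h) := by
        rw [Real.mul_self_sqrt (hpos p_h)]
        linarith [h1 ▸ hcs]
      exact le_of_mul_le_mul_right this h0
  · -- second inequality
    have hE : A e e = B (u - uH) e := he e
    have hb := hBbdd (u - uH) e
    have h2 : A e e ≤ c₂B * ‖u - uH‖ * Real.sqrt (A e e) := by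
      calc A e e = B (u - uH) e := hE
        _ ≤ |B (u - uH) e| := le_abs_self _
        _ ≤ c₂B * ‖u - uH‖ * Real.sqrt (A e e) := hb
    rcases eq_or_lt_of_le (Real.sqrt_nonneg (A e e)) with h0 | h0
    · rw [← h0]; positivity
    · have : Real.sqrt (A e e) * Real.sqrt (A e e)
          ≤ (c₂B * ‖u - uH‖) * Real.sqrt (A e e) := by
        rw [Real.mul_self_sqrt (hpos e)]; linarith
      exact le_of_mul_le_mul_right this h0
end

section
/- Let X_H ⊆ X_H̄ ⊆ X and Y_h ⊆ Y be subspaces and assume the discrete inf-sup condition on the larger space with constant c̄_S > 0: c̄_S ‖v‖_X ≤ sup_{0 ≠ q_h ∈ Y_h} (B v q_h)/‖q_h‖_A for all v ∈ X_H̄. Let f ∈ Y*, let (ũ_H, p_h) ∈ X_H × Y_h satisfy A p_h q_h + B ũ_H q_h = f q_h for all q_h ∈ Y_h and B v_H p_h = 0 for all v_H ∈ X_H, and let (ũ_H̄, p̄_h) ∈ X_H̄ × Y_h satisfy A p̄_h q_h + B ũ_H̄ q_h = f q_h for all q_h ∈ Y_h and B v p̄_h = 0 for all v ∈ X_H̄.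 Then ‖ũ_H̄ − ũ_H‖_X ≤ (c₂ᴮ/(c̄_S)²) ‖p_h‖_A. -/
/-- comparison of the discrete solutions on nested spaces:
`‖ũ_H̄ − ũ_H‖_X ≤ (c₂ᴮ/(c̄_S)²) ‖p_h‖_A`. -/
theorem stmt10
    {X Y : Type*} [NormedAddCommGroup X] [InnerProductSpace ℝ X] [CompleteSpace X]
    [NormedAddCommGroup Y] [InnerProductSpace ℝ Y] [CompleteSpace Y]
    (A : Y →L[ℝ] Y →L[ℝ] ℝ)
    (hAsym : ∀ p q : Y, A p q = A q p)
    (μ : ℝ) (hμ : 0 < μ) (hAcoer : ∀ q : Y, μ * ‖q‖ ^ 2 ≤ A q q)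
    (B : X →L[ℝ] Y →L[ℝ] ℝ)
    (c₂B : ℝ) (hc₂B : 0 < c₂B)
    (hBbdd : ∀ (v : X) (q : Y), |B v q| ≤ c₂B * ‖v‖ * Real.sqrt (A q q))
    (X_H X_Hbar : Submodule ℝ X) (hsub : X_H ≤ X_Hbar) (Y_h : Submodule ℝ Y)
    (cSbar : ℝ) (hcSbar : 0 < cSbar)
    (hinfsup : ∀ v ∈ X_Hbar, cSbar * ‖v‖ ≤
      ⨆ q : {q : Y // q ∈ Y_h ∧ q ≠ 0},
        B v (q : Y) / Real.sqrt (A (q : Y) (q : Y)))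
    (f : Y →L[ℝ] ℝ)
    (uH : X) (huHmem : uH ∈ X_H) (p_h : Y) (hphmem : p_h ∈ Y_h)
    (h1 : ∀ q_h ∈ Y_h, A p_h q_h + B uH q_h = f q_h)
    (h2 : ∀ v_H ∈ X_H, B v_H p_h = 0)
    (uHbar : X) (huHbarmem : uHbar ∈ X_Hbar)
    (pbar_h : Y) (hpbarmem : pbar_h ∈ Y_h)
    (h3 : ∀ q_h ∈ Y_h, A pbar_h q_h + B uHbar q_h = f q_h)
    (h4 : ∀ v ∈ X_Hbar, B v pbar_h = 0) :
    ‖uHbar - uH‖ ≤ (c₂B / cSbar ^ 2) * Real.sqrt (A p_h p_h) := by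
  set e := uHbar - uH with he
  have heMem : e ∈ X_Hbar := Submodule.sub_mem _ huHbarmem (hsub huHmem)
  set d := p_h - pbar_h with hd
  have hdMem : d ∈ Y_h := Submodule.sub_mem _ hphmem hpbarmem
  have hAnn : ∀ q : Y, 0 ≤ A q q := fun q =>
    le_trans (by positivity) (hAcoer q)
  -- expansion of the quadratic form
  have expand : ∀ (p q : Y) (t : ℝ),
      A (q + t • p) (q + t • p) = A q q + 2 * t * (A p q) + t ^ 2 * (A p p) := by
    intro p q t
    have hs := hAsym p q
    simp only [map_add, map_smul, ContinuousLinearMap.add_apply,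
      ContinuousLinearMap.smul_apply, smul_eq_mul]
    rw [hs]; ring
  -- Cauchy-Schwarz for A
  have hCS : ∀ p q : Y, (A p q) ^ 2 ≤ A p p * A q q := by
    intro p q
    have hdisc : discrim (A p p) (2 * A p q) (A q q) ≤ 0 := by
      apply discrim_le_zero
      intro x
      have := hAnn (q + x • p)
      rw [expand p q x] at this
      nlinarith [this]
    rw [discrim] at hdisc
    nlinarith [hdisc]
  have hCS' : ∀ p q : Y, |A p q| ≤ Real.sqrt (A p p) * Real.sqrt (A q q) := by
    intro p q
    rw [← Real.sqrt_mul (hAnn p), ← Real.sqrt_sq_eq_abs]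
    exact Real.sqrt_le_sqrt (hCS p q)
  -- key identity on Y_h
  have hkey : ∀ q ∈ Y_h, A d q = B e q := by
    intro q hq
    have e1 := h1 q hq
    have e3 := h3 q hq
    simp only [he, hd, map_sub, ContinuousLinearMap.sub_apply]
    linarith
  -- energy identity
  have hBed : A d d = B e p_h := by
    have h0 : B e pbar_h = 0 := h4 e heMem
    have := hkey d hdMem
    rw [this]
    simp only [hd, map_sub, h0]
    ring
  have hA1 : A d d ≤ c₂B * ‖e‖ * Real.sqrt (A p_h p_h) := by
    rw [hBed]
    exact le_trans (le_abs_self _) (hBbdd e p_h)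
  -- inf-sup bound
  have hinf : cSbar * ‖e‖ ≤ Real.sqrt (A d d) := by
    rcases isEmpty_or_nonempty {q : Y // q ∈ Y_h ∧ q ≠ 0} with hE | hN
    · have := hinfsup e heMem
      rw [Real.iSup_of_isEmpty] at this
      exact le_trans this (Real.sqrt_nonneg _)
    · refine le_trans (hinfsup e heMem) (ciSup_le ?_)
      rintro ⟨q, hq, hq0⟩
      have hqn : 0 < ‖q‖ := norm_pos_iff.mpr hq0
      have hApos : 0 < A q q :=
        lt_of_lt_of_le (mul_pos hμ (pow_pos hqn 2)) (hAcoer q)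
      have hsq : 0 < Real.sqrt (A q q) := Real.sqrt_pos.mpr hApos
      rw [div_le_iff₀ hsq]
      calc B e q = A d q := (hkey q hq).symm
        _ ≤ |A d q| := le_abs_self _
        _ ≤ Real.sqrt (A d d) * Real.sqrt (A q q) := hCS' d q
  -- combine
  have hsqd : (cSbar * ‖e‖) ^ 2 ≤ A d d := by
    have h0 : 0 ≤ cSbar * ‖e‖ := by positivity
    nlinarith [Real.sq_sqrt (hAnn d), Real.sqrt_nonneg (A d d), hinf]
  have hfinal : cSbar ^ 2 * ‖e‖ ^ 2 ≤ c₂B * ‖e‖ * Real.sqrt (A p_h p_h) := by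
    nlinarith [hsqd, hA1]
  rcases eq_or_lt_of_le (norm_nonneg e) with h0 | h0
  · rw [← h0]
    positivity
  · rw [div_mul_eq_mul_div, le_div_iff₀ (pow_pos hcSbar 2)]
    nlinarith [hfinal, h0]
end

section
/- (Reliability of the error estimator under the saturation assumption.) Let X_H ⊆ X_H̄ ⊆ X and Y_h ⊆ Y be subspaces and assume the discrete inf-sup condition on the larger space with constant c̄_S > 0: c̄_S ‖v‖_X ≤ sup_{0 ≠ q_h ∈ Y_h} (B v q_h)/‖q_h‖_A for all v ∈ X_H̄. Let f ∈ Y* and u ∈ X with B u q = f q for all q ∈ Y. Let (ũ_H, p_h) ∈ X_H × Y_h satisfy A p_h q_h + B ũ_H q_h = f q_h for all q_h ∈ Y_h and B v_H p_h = 0 for all v_H ∈ X_H, and let (ũ_H̄, p̄_h) ∈ X_H̄ × Y_h satisfy the analogous equations with X_H replaced by X_H̄. Assume the saturation assumption: ‖u − ũ_H̄‖_X ≤ η ‖u − ũ_H‖_X for some η ∈ (0,1). Then ‖u − ũ_H‖_X ≤ (1/(1 − η)) · (c₂ᴮ/(c̄_S)²) · ‖p_h‖_A. -/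
/-- reliability of the error estimator under the saturation
assumption: `‖u − ũ_H‖_X ≤ (1/(1−η)) (c₂ᴮ/(c̄_S)²) ‖p_h‖_A`. -/
theorem stmt11
    {X Y : Type*} [NormedAddCommGroup X] [InnerProductSpace ℝ X] [CompleteSpace X]
    [NormedAddCommGroup Y] [InnerProductSpace ℝ Y] [CompleteSpace Y]
    (A : Y →L[ℝ] Y →L[ℝ] ℝ)
    (hAsym : ∀ p q : Y, A p q = A q p)
    (μ : ℝ) (hμ : 0 < μ) (hAcoer : ∀ q : Y, μ * ‖q‖ ^ 2 ≤ A q q)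
    (B : X →L[ℝ] Y →L[ℝ] ℝ)
    (c₂B : ℝ) (hc₂B : 0 < c₂B)
    (hBbdd : ∀ (v : X) (q : Y), |B v q| ≤ c₂B * ‖v‖ * Real.sqrt (A q q))
    (X_H X_Hbar : Submodule ℝ X) (hsub : X_H ≤ X_Hbar) (Y_h : Submodule ℝ Y)
    (cSbar : ℝ) (hcSbar : 0 < cSbar)
    (hinfsup : ∀ v ∈ X_Hbar, cSbar * ‖v‖ ≤
      ⨆ q : {q : Y // q ∈ Y_h ∧ q ≠ 0},
        B v (q : Y) / Real.sqrt (A (q : Y) (q : Y)))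
    (f : Y →L[ℝ] ℝ) (u : X) (hu : ∀ q : Y, B u q = f q)
    (uH : X) (huHmem : uH ∈ X_H) (p_h : Y) (hphmem : p_h ∈ Y_h)
    (h1 : ∀ q_h ∈ Y_h, A p_h q_h + B uH q_h = f q_h)
    (h2 : ∀ v_H ∈ X_H, B v_H p_h = 0)
    (uHbar : X) (huHbarmem : uHbar ∈ X_Hbar)
    (pbar_h : Y) (hpbarmem : pbar_h ∈ Y_h)
    (h3 : ∀ q_h ∈ Y_h, A pbar_h q_h + B uHbar q_h = f q_h)
    (h4 : ∀ v ∈ X_Hbar, B v pbar_h = 0)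
    (η : ℝ) (hη0 : 0 < η) (hη1 : η < 1)
    (hsat : ‖u - uHbar‖ ≤ η * ‖u - uH‖) :
    ‖u - uH‖ ≤ (1 / (1 - η)) * (c₂B / cSbar ^ 2) * Real.sqrt (A p_h p_h) := by

  have hA0 : ∀ q : Y, 0 ≤ A q q := fun q => le_trans (by positivity) (hAcoer q)
  have hCS : ∀ p q : Y, (A p q) ^ 2 ≤ A p p * A q q := by
    intro p q
    have key : ∀ t : ℝ, 0 ≤ A q q * (t * t) + (2 * A p q) * t + A p p := by
      intro t
      have h := hA0 (p + t • q)
      simp only [map_add, map_smul, ContinuousLinearMap.add_apply,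
        ContinuousLinearMap.smul_apply, smul_eq_mul] at h
      rw [hAsym q p] at h
      have hre : A q q * (t * t) + (2 * A p q) * t + A p p
          = A p p + t * A p q + t * (A p q + t * A q q) := by ring
      linarith [hre ▸ h]
    have hd := discrim_le_zero key
    rw [discrim] at hd
    nlinarith
  set w := uHbar - uH with hw
  have hwmem : w ∈ X_Hbar := Submodule.sub_mem _ huHbarmem (hsub huHmem)
  set e := p_h - pbar_h with he
  have hemem : e ∈ Y_h := Submodule.sub_mem _ hphmem hpbarmem
  have hAeB : ∀ q ∈ Y_h, A e q = B w q := by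
    intro q hq
    have e1 := h1 q hq
    have e3 := h3 q hq
    simp only [he, hw, map_sub, ContinuousLinearMap.sub_apply]
    linarith
  set E := Real.sqrt (A e e) with hE
  set P := Real.sqrt (A p_h p_h) with hP
  have hE0 : (0:ℝ) ≤ E := Real.sqrt_nonneg _
  have hP0 : (0:ℝ) ≤ P := Real.sqrt_nonneg _
  have stepA : cSbar * ‖w‖ ≤ E := by
    refine le_trans (hinfsup w hwmem) (Real.iSup_le ?_ hE0)
    rintro ⟨q, hqmem, hq0⟩
    have hqn : (0:ℝ) < ‖q‖ := norm_pos_iff.mpr hq0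
    have hq : (0:ℝ) < A q q := lt_of_lt_of_le (by positivity) (hAcoer q)
    have hsq : (0:ℝ) < Real.sqrt (A q q) := Real.sqrt_pos.mpr hq
    simp only
    rw [← hAeB q hqmem, div_le_iff₀ hsq]
    calc A e q ≤ |A e q| := le_abs_self _
      _ = Real.sqrt ((A e q) ^ 2) := (Real.sqrt_sq_eq_abs _).symm
      _ ≤ Real.sqrt (A e e * A q q) := Real.sqrt_le_sqrt (hCS e q)
      _ = E * Real.sqrt (A q q) := Real.sqrt_mul (hA0 e) _
  have hBE : E ^ 2 = B w p_h := by
    have h0 : B w pbar_h = 0 := h4 w hwmem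
    have hee : A e e = B w p_h := by
      rw [hAeB e hemem, he, map_sub, h0]
      ring
    rw [hE, Real.sq_sqrt (hA0 e), hee]
  have hEbound : E ^ 2 ≤ c₂B * ‖w‖ * P := by
    rw [hBE]
    exact le_trans (le_abs_self _) (hBbdd w p_h)
  have hcE : cSbar * E ≤ c₂B * P := by
    rcases eq_or_lt_of_le hE0 with hEz | hEpos
    · rw [← hEz, mul_zero]; positivity
    · have h5 : cSbar * E * E ≤ c₂B * P * E := by
        nlinarith [mul_le_mul_of_nonneg_left hEbound hcSbar.le,
          mul_le_mul_of_nonneg_left stepA (mul_nonneg hc₂B.le hP0)]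
      exact le_of_mul_le_mul_right h5 hEpos
  have htri : (1 - η) * ‖u - uH‖ ≤ ‖w‖ := by
    have hdecomp : u - uH = (u - uHbar) + w := by rw [hw]; abel
    have := norm_add_le (u - uHbar) w
    rw [← hdecomp] at this
    linarith
  have h1η : (0:ℝ) < 1 - η := by linarith
  have hcS2 : (0:ℝ) < cSbar ^ 2 := by positivity
  have key : (1 - η) * cSbar ^ 2 * ‖u - uH‖ ≤ c₂B * P := by
    nlinarith [mul_le_mul_of_nonneg_left stepA hcSbar.le,
      mul_le_mul_of_nonneg_left htri hcS2.le,
      mul_le_mul_of_nonneg_left stepA (mul_nonneg h1η.le hcSbar.le), hcE,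
      mul_le_mul_of_nonneg_left hcE h1η.le,
      mul_le_mul_of_nonneg_left stepA h1η.le]
  have target : ‖u - uH‖ ≤ (c₂B * P) / ((1 - η) * cSbar ^ 2) := by
    rw [le_div_iff₀ (by positivity)]
    nlinarith [key]
  calc ‖u - uH‖ ≤ (c₂B * P) / ((1 - η) * cSbar ^ 2) := target
    _ = (1 / (1 - η)) * (c₂B / cSbar ^ 2) * P := by
        rw [one_div, div_eq_mul_inv, div_eq_mul_inv, mul_inv]; ring
end

section
/- (Discrete inf-sup stability from an approximation property.) Let X_H̄ ⊆ X be a subspace and Y_h ⊆ Y a closed subspace, and let δ ∈ (0,1). Assume that for every v ∈ X_H̄, with p_v ∈ Y the unique solution of A p_v q = B v q for all q ∈ Y, there exists q_h ∈ Y_h with ‖p_v − q_h‖_A ≤ δ ‖p_v‖_A. Then the discrete inf-sup stability condition holds with constant c₁ᴮ (1 − δ): for every v ∈ X_H̄, c₁ᴮ (1 − δ) ‖v‖_X ≤ sup_{0 ≠ q_h ∈ Y_h} (B v q_h)/‖q_h‖_A; moreover (1 − δ) ‖p_v‖_A ≤ sup_{0 ≠ q_h ∈ Y_h} (B v q_h)/‖q_h‖_A.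 -/
/-!
Write `‖q‖_A = √(A q q)`. By Lax–Milgram, `B v` has an `A`-Riesz representative `p_v`, and
Cauchy–Schwarz for `A` gives `B v q / ‖q‖_A = A p_v q / ‖q‖_A ≤ ‖p_v‖_A`; with the continuous
inf-sup condition this yields `c₁ᴮ ‖v‖ ≤ ‖p_v‖_A`. Conversely, for the approximation `q_h` of `p_v`
the polarization identity `2 A p_v q_h = ‖p_v‖²_A + ‖q_h‖²_A - ‖p_v - q_h‖²_A` and
`‖p_v - q_h‖_A ≤ δ ‖p_v‖_A` give `A p_v q_h ≥ (1 - δ) ‖p_v‖_A ‖q_h‖_A`.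
-/

open Real

namespace ContinuousLinearMap

variable {Y : Type*} [NormedAddCommGroup Y] [NormedSpace ℝ Y] {A : Y →L[ℝ] Y →L[ℝ] ℝ}

theorem apply_self_nonneg_of_coercive {μ : ℝ} (hμ : 0 ≤ μ) (hA : ∀ q : Y, μ * ‖q‖ ^ 2 ≤ A q q)
    (q : Y) : 0 ≤ A q q :=
  (by positivity : 0 ≤ μ * ‖q‖ ^ 2).trans (hA q)

variable (hsym : ∀ p q : Y, A p q = A q p)
include hsym

theorem apply_sub_sub_of_symm (p q : Y) :
    A (p - q) (p - q) = A p p - 2 * A p q + A q q := by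
  simp only [map_sub, _root_.sub_apply, hsym q p]
  ring

variable (hnn : ∀ q : Y, 0 ≤ A q q)
include hnn

theorem abs_apply_le_sqrt_mul_sqrt (p q : Y) : |A p q| ≤ √(A p p) * √(A q q) := by
  have hdiscrim : discrim (A q q) (2 * A p q) (A p p) ≤ 0 := by
    refine discrim_le_zero fun t => ?_
    have h := hnn (p + t • q)
    simp only [map_add, map_smul, _root_.add_apply, _root_.smul_apply,
      smul_eq_mul, hsym q p] at h
    linarith
  rw [← sqrt_mul (hnn p)]
  exact abs_le_sqrt (by rw [discrim] at hdiscrim; linarith)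

theorem div_sqrt_le_sqrt (p q : Y) : A p q / √(A q q) ≤ √(A p p) :=
  div_le_of_le_mul₀ (sqrt_nonneg _) (sqrt_nonneg _)
    ((le_abs_self _).trans (abs_apply_le_sqrt_mul_sqrt hsym hnn p q))

theorem iSup_div_sqrt_le_sqrt {ι : Type*} (f : ι → Y) {ℓ : Y → ℝ} {p : Y}
    (hp : ∀ q, A p q = ℓ q) : ⨆ i, ℓ (f i) / √(A (f i) (f i)) ≤ √(A p p) :=
  Real.iSup_le (fun i => hp (f i) ▸ div_sqrt_le_sqrt hsym hnn p (f i)) (sqrt_nonneg _)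

theorem one_sub_mul_sqrt_mul_sqrt_le_apply {δ : ℝ} (hδ : δ ≤ 1) {p q : Y}
    (hpq : √(A (p - q) (p - q)) ≤ δ * √(A p p)) : (1 - δ) * √(A p p) * √(A q q) ≤ A p q := by
  have hpolar := apply_sub_sub_of_symm hsym p q
  have hsub := sq_sqrt (hnn (p - q))
  have hp := sq_sqrt (hnn p)
  have hq := sq_sqrt (hnn q)
  have hsub_nonneg := sqrt_nonneg (A (p - q) (p - q))
  -- with `a = √(A p p)`, `b = √(A q q)`: `2 A p q ≥ (1 - δ²) a² + b²`, and
  -- `(1 - δ²) a² + b² - 2 (1 - δ) a b = ((1 - δ) a - b)² + 2 (1 - δ) (δ a) a`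
  nlinarith [sq_nonneg ((1 - δ) * √(A p p) - √(A q q)),
    mul_nonneg (sub_nonneg.2 hδ) (mul_nonneg (hsub_nonneg.trans hpq) (sqrt_nonneg (A p p))),
    mul_le_mul hpq hpq hsub_nonneg (hsub_nonneg.trans hpq)]

theorem one_sub_mul_sqrt_le_iSup (S : Set Y) {ℓ : Y → ℝ} {p : Y} (hp : ∀ q, A p q = ℓ q)
    {δ : ℝ} (hδ : δ < 1) {q₀ : Y} (hq₀ : q₀ ∈ S)
    (hpq₀ : √(A (p - q₀) (p - q₀)) ≤ δ * √(A p p)) :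
    (1 - δ) * √(A p p) ≤ ⨆ q : {q : Y // q ∈ S ∧ q ≠ 0}, ℓ q / √(A q q) := by
  by_cases hq₀0 : A q₀ q₀ = 0
  · have hpq₀0 : A p q₀ = 0 := abs_nonpos_iff.1 <| by
      simpa [hq₀0] using abs_apply_le_sqrt_mul_sqrt hsym hnn p q₀
    have hp0 : √(A p p) = 0 := by
      rw [apply_sub_sub_of_symm hsym, hpq₀0, hq₀0, mul_zero, sub_zero, add_zero] at hpq₀
      nlinarith [sqrt_nonneg (A p p)]
    have hℓ : ∀ q, ℓ q = 0 := fun q => by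
      simpa [hp0, hp q] using abs_apply_le_sqrt_mul_sqrt hsym hnn p q
    rw [hp0, mul_zero]
    exact Real.iSup_nonneg fun q => by rw [hℓ, zero_div]
  · have hbdd : BddAbove (Set.range fun q : {q : Y // q ∈ S ∧ q ≠ 0} => ℓ q / √(A q q)) :=
      ⟨√(A p p), Set.forall_mem_range.2 fun q => hp q ▸ div_sqrt_le_sqrt hsym hnn p q⟩
    have hq₀ne : q₀ ≠ 0 := by rintro rfl; simp at hq₀0
    calc (1 - δ) * √(A p p) ≤ ℓ q₀ / √(A q₀ q₀) := by
          rw [le_div_iff₀ (sqrt_pos.2 ((hnn q₀).lt_of_ne' hq₀0)), ← hp]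
          exact one_sub_mul_sqrt_mul_sqrt_le_apply hsym hnn hδ.le hpq₀
      _ ≤ _ := le_ciSup hbdd ⟨q₀, hq₀, hq₀ne⟩

end ContinuousLinearMap

theorem IsCoercive.exists_forall_apply_eq {V : Type*} [NormedAddCommGroup V]
    [InnerProductSpace ℝ V] [CompleteSpace V] {A : V →L[ℝ] V →L[ℝ] ℝ} (hA : IsCoercive A)
    (ℓ : V →L[ℝ] ℝ) : ∃ p, ∀ q, A p q = ℓ q :=
  ⟨hA.continuousLinearEquivOfBilin.symm ((InnerProductSpace.toDual ℝ V).symm ℓ), fun q => by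
    rw [← hA.continuousLinearEquivOfBilin_apply, ContinuousLinearEquiv.apply_symm_apply,
      InnerProductSpace.toDual_symm_apply]⟩

theorem stmt12_general
    {X Y : Type*} [NormedAddCommGroup X] [InnerProductSpace ℝ X]
    [NormedAddCommGroup Y] [InnerProductSpace ℝ Y] [CompleteSpace Y]
    (A : Y →L[ℝ] Y →L[ℝ] ℝ)
    (hAsym : ∀ p q : Y, A p q = A q p)
    (μ : ℝ) (hμ : 0 < μ) (hAcoer : ∀ q : Y, μ * ‖q‖ ^ 2 ≤ A q q)
    (B : X →L[ℝ] Y →L[ℝ] ℝ)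
    (c₁B : ℝ)
    (hBinfsup : ∀ v : X, c₁B * ‖v‖ ≤
      ⨆ q : {q : Y // q ≠ 0}, B v (q : Y) / Real.sqrt (A (q : Y) (q : Y)))
    (X_Hbar : Submodule ℝ X) (Y_h : Submodule ℝ Y)
    (δ : ℝ) (hδ1 : δ < 1)
    (happrox : ∀ v ∈ X_Hbar, ∀ p_v : Y, (∀ q : Y, A p_v q = B v q) →
      ∃ q_h ∈ Y_h, Real.sqrt (A (p_v - q_h) (p_v - q_h)) ≤
        δ * Real.sqrt (A p_v p_v)) :
    ∀ v ∈ X_Hbar,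
      c₁B * (1 - δ) * ‖v‖ ≤
        (⨆ q : {q : Y // q ∈ Y_h ∧ q ≠ 0},
          B v (q : Y) / Real.sqrt (A (q : Y) (q : Y))) ∧
      ∀ p_v : Y, (∀ q : Y, A p_v q = B v q) →
        (1 - δ) * Real.sqrt (A p_v p_v) ≤
          ⨆ q : {q : Y // q ∈ Y_h ∧ q ≠ 0},
            B v (q : Y) / Real.sqrt (A (q : Y) (q : Y)) := by
  intro v hv
  have hnn := ContinuousLinearMap.apply_self_nonneg_of_coercive hμ.le hAcoer
  have hlower : ∀ p_v : Y, (∀ q : Y, A p_v q = B v q) →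
      (1 - δ) * √(A p_v p_v) ≤ ⨆ q : {q : Y // q ∈ Y_h ∧ q ≠ 0}, B v q / √(A q q) := by
    intro p_v hp_v
    obtain ⟨q_h, hq_h, hp_vq_h⟩ := happrox v hv p_v hp_v
    exact ContinuousLinearMap.one_sub_mul_sqrt_le_iSup hAsym hnn Y_h hp_v hδ1 hq_h hp_vq_h
  have hcoer : IsCoercive A := ⟨μ, hμ, fun q => by simpa only [mul_assoc, ← sq] using hAcoer q⟩
  obtain ⟨p, hp⟩ := hcoer.exists_forall_apply_eq (B v)
  refine ⟨?_, hlower⟩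
  calc c₁B * (1 - δ) * ‖v‖ = (1 - δ) * (c₁B * ‖v‖) := by ring
    _ ≤ (1 - δ) * √(A p p) := mul_le_mul_of_nonneg_left
        ((hBinfsup v).trans
          (ContinuousLinearMap.iSup_div_sqrt_le_sqrt hAsym hnn Subtype.val hp)) (by linarith)
    _ ≤ _ := hlower p hp

/-- discrete inf-sup stability from an approximation property:
if for each `v ∈ X_H̄` the Riesz lift `p_v = A⁻¹ B v` can be approximated in
`Y_h` with relative accuracy `δ < 1` in the `A`-energy norm, then the discrete
inf-sup condition holds with constant `c₁ᴮ (1 − δ)`; moreover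
`(1 − δ) ‖p_v‖_A ≤ sup_{0 ≠ q_h ∈ Y_h} (B v q_h)/‖q_h‖_A`. -/
theorem stmt12
    {X Y : Type*} [NormedAddCommGroup X] [InnerProductSpace ℝ X] [CompleteSpace X]
    [NormedAddCommGroup Y] [InnerProductSpace ℝ Y] [CompleteSpace Y]
    (A : Y →L[ℝ] Y →L[ℝ] ℝ)
    (hAsym : ∀ p q : Y, A p q = A q p)
    (μ : ℝ) (hμ : 0 < μ) (hAcoer : ∀ q : Y, μ * ‖q‖ ^ 2 ≤ A q q)
    (B : X →L[ℝ] Y →L[ℝ] ℝ)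
    (c₁B : ℝ) (hc₁B : 0 < c₁B)
    (hBinfsup : ∀ v : X, c₁B * ‖v‖ ≤
      ⨆ q : {q : Y // q ≠ 0}, B v (q : Y) / Real.sqrt (A (q : Y) (q : Y)))
    (X_Hbar : Submodule ℝ X) (Y_h : Submodule ℝ Y)
    (hYhclosed : IsClosed (Y_h : Set Y))
    (δ : ℝ) (hδ0 : 0 < δ) (hδ1 : δ < 1)
    (happrox : ∀ v ∈ X_Hbar, ∀ p_v : Y, (∀ q : Y, A p_v q = B v q) →
      ∃ q_h ∈ Y_h, Real.sqrt (A (p_v - q_h) (p_v - q_h)) ≤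
        δ * Real.sqrt (A p_v p_v)) :
    ∀ v ∈ X_Hbar,
      c₁B * (1 - δ) * ‖v‖ ≤
        (⨆ q : {q : Y // q ∈ Y_h ∧ q ≠ 0},
          B v (q : Y) / Real.sqrt (A (q : Y) (q : Y))) ∧
      ∀ p_v : Y, (∀ q : Y, A p_v q = B v q) →
        (1 - δ) * Real.sqrt (A p_v p_v) ≤
          ⨆ q : {q : Y // q ∈ Y_h ∧ q ≠ 0},
            B v (q : Y) / Real.sqrt (A (q : Y) (q : Y)) :=
  stmt12_general A hAsym μ hμ hAcoer B c₁B hBinfsup X_Hbar Y_h δ hδ1 happrox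
end

section
/- (Quasi-optimality in a discretization-dependent norm.) Let N : X → ℝ satisfy N(w) ≥ 0, N(w + w') ≤ N(w) + N(w'), and N(w) ≤ ‖w‖_X for all w, w' ∈ X. Let X_H ⊆ X and Y_h ⊆ Y be subspaces, and assume the discrete inf-sup condition with constant c̃_S > 0: c̃_S N(v_H) ≤ sup_{0 ≠ q_h ∈ Y_h} (B v_H q_h)/‖q_h‖_A for all v_H ∈ X_H. Let f ∈ Y*, let u ∈ X satisfy B u q = f q for all q ∈ Y, and let (ũ_H, p_h) ∈ X_H × Y_h be a discrete saddle-point solution, i.e. A p_h q_h + B ũ_H q_h = f q_h for all q_h ∈ Y_h and B v_H p_h = 0 for all v_H ∈ X_H. Then N(u − ũ_H) ≤ (1 + 2 c₂ᴮ/c̃_S) ‖u − v_H‖_X for every v_H ∈ X_H. -/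
/-- quasi-optimality in a discretization-dependent norm:
`N(u − ũ_H) ≤ (1 + 2 c₂ᴮ/c̃_S) ‖u − v_H‖_X` for every `v_H ∈ X_H`. -/
theorem stmt14
    {X Y : Type*} [NormedAddCommGroup X] [InnerProductSpace ℝ X] [CompleteSpace X]
    [NormedAddCommGroup Y] [InnerProductSpace ℝ Y] [CompleteSpace Y]
    (A : Y →L[ℝ] Y →L[ℝ] ℝ)
    (hAsym : ∀ p q : Y, A p q = A q p)
    (μ : ℝ) (hμ : 0 < μ) (hAcoer : ∀ q : Y, μ * ‖q‖ ^ 2 ≤ A q q)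
    (B : X →L[ℝ] Y →L[ℝ] ℝ)
    (c₂B : ℝ) (hc₂B : 0 < c₂B)
    (hBbdd : ∀ (v : X) (q : Y), |B v q| ≤ c₂B * ‖v‖ * Real.sqrt (A q q))
    (N : X → ℝ) (hN0 : ∀ w : X, 0 ≤ N w)
    (hNadd : ∀ w w' : X, N (w + w') ≤ N w + N w')
    (hNle : ∀ w : X, N w ≤ ‖w‖)
    (X_H : Submodule ℝ X) (Y_h : Submodule ℝ Y)
    (ctS : ℝ) (hctS : 0 < ctS)
    (hinfsup : ∀ v_H ∈ X_H, ctS * N v_H ≤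
      ⨆ q : {q : Y // q ∈ Y_h ∧ q ≠ 0},
        B v_H (q : Y) / Real.sqrt (A (q : Y) (q : Y)))
    (f : Y →L[ℝ] ℝ) (u : X) (hu : ∀ q : Y, B u q = f q)
    (uH : X) (huHmem : uH ∈ X_H) (p_h : Y) (hphmem : p_h ∈ Y_h)
    (h1 : ∀ q_h ∈ Y_h, A p_h q_h + B uH q_h = f q_h)
    (h2 : ∀ v_H ∈ X_H, B v_H p_h = 0) :
    ∀ v_H ∈ X_H, N (u - uH) ≤ (1 + 2 * c₂B / ctS) * ‖u - v_H‖ := by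
  intro v_H hvH
  -- positivity of A q q
  have hApos : ∀ q : Y, 0 ≤ A q q := fun q =>
    le_trans (by positivity) (hAcoer q)
  -- Cauchy-Schwarz for A
  have hCS : ∀ p q : Y, |A p q| ≤ Real.sqrt (A p p) * Real.sqrt (A q q) := by
    intro p q
    have hquad : ∀ t : ℝ, 0 ≤ (A q q) * (t * t) + (2 * A p q) * t + A p p := by
      intro t
      have := hApos (p + t • q)
      have e : A (p + t • q) (p + t • q)
          = (A q q) * (t * t) + (2 * A p q) * t + A p p := by
        simp [map_add, map_smul, ContinuousLinearMap.add_apply,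
          ContinuousLinearMap.smul_apply, smul_eq_mul, hAsym q p]
        ring
      linarith [e ▸ this]
    have hd := discrim_le_zero hquad
    unfold discrim at hd
    have h4 : (A p q) ^ 2 ≤ (A p p) * (A q q) := by nlinarith
    calc |A p q| = Real.sqrt ((A p q) ^ 2) := by rw [Real.sqrt_sq_eq_abs]
      _ ≤ Real.sqrt ((A p p) * (A q q)) := Real.sqrt_le_sqrt h4
      _ = Real.sqrt (A p p) * Real.sqrt (A q q) := Real.sqrt_mul (hApos p) _
  set e := u - v_H with he
  set w := v_H - uH with hw
  have hwmem : w ∈ X_H := Submodule.sub_mem _ hvH huHmem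
  -- A p_h p_h = B e p_h
  have hph : A p_h p_h = B e p_h := by
    have h1' := h1 p_h hphmem
    have hu' := hu p_h
    have h2' := h2 w hwmem
    have : B w p_h = B v_H p_h - B uH p_h := by
      simp [hw, map_sub, ContinuousLinearMap.sub_apply]
    have hB : B v_H p_h = B uH p_h := by linarith [this ▸ h2']
    have : B e p_h = B u p_h - B v_H p_h := by
      simp [he, map_sub, ContinuousLinearMap.sub_apply]
    linarith
  -- ‖p_h‖_A ≤ c₂B ‖e‖
  have hsph : Real.sqrt (A p_h p_h) ≤ c₂B * ‖e‖ := by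
    set s := Real.sqrt (A p_h p_h) with hs
    have hs0 : 0 ≤ s := Real.sqrt_nonneg _
    have hs2 : s ^ 2 = A p_h p_h := Real.sq_sqrt (hApos p_h)
    have hle : s ^ 2 ≤ c₂B * ‖e‖ * s := by
      rw [hs2, hph]
      exact le_trans (le_abs_self _) (hBbdd e p_h)
    rcases eq_or_lt_of_le hs0 with h0 | h0
    · rw [← h0]; positivity
    · nlinarith
  -- bound for each test function
  have hsup : ctS * N w ≤ 2 * c₂B * ‖e‖ := by
    refine le_trans (hinfsup w hwmem) (Real.iSup_le ?_ (by positivity))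
    rintro ⟨q, hq, hq0⟩
    simp only
    by_cases hAq : Real.sqrt (A q q) = 0
    · rw [hAq, div_zero]; positivity
    · have hAqpos : 0 < Real.sqrt (A q q) :=
        lt_of_le_of_ne (Real.sqrt_nonneg _) (Ne.symm hAq)
      rw [div_le_iff₀ hAqpos]
      have h1' := h1 q hq
      have hu' := hu q
      have hBw : B w q = A p_h q - B e q := by
        simp only [hw, he, map_sub, ContinuousLinearMap.sub_apply]
        linarith
      have hb1 : |B e q| ≤ c₂B * ‖e‖ * Real.sqrt (A q q) := hBbdd e q
      have hb2 : |A p_h q| ≤ c₂B * ‖e‖ * Real.sqrt (A q q) :=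
        le_trans (hCS p_h q) (by
          have := mul_le_mul_of_nonneg_right hsph (Real.sqrt_nonneg (A q q))
          linarith)
      calc B w q = A p_h q - B e q := hBw
        _ ≤ |A p_h q| + |B e q| := by
            have := le_abs_self (A p_h q)
            have := neg_abs_le (B e q)
            linarith
        _ ≤ 2 * c₂B * ‖e‖ * Real.sqrt (A q q) := by linarith
  have hNw : N w ≤ 2 * c₂B / ctS * ‖e‖ := by
    rw [div_mul_eq_mul_div, le_div_iff₀ hctS]
    linarith [hsup]
  have hsplit : u - uH = e + w := by rw [he, hw]; abel
  calc N (u - uH) = N (e + w) := by rw [hsplit]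
    _ ≤ N e + N w := hNadd e w
    _ ≤ ‖e‖ + 2 * c₂B / ctS * ‖e‖ := add_le_add (hNle e) hNw
    _ = (1 + 2 * c₂B / ctS) * ‖e‖ := by ring
end

section
/- Let X_H ⊆ X and Y_h ⊆ Y be subspaces, let f ∈ Y*, and let u ∈ X satisfy B u q = f q for all q ∈ Y. Let (ũ_H, p_h) ∈ X_H × Y_h be a discrete saddle-point solution, i.e. A p_h q_h + B ũ_H q_h = f q_h for all q_h ∈ Y_h and B v_H p_h = 0 for all v_H ∈ X_H. Then the discrete multiplier is bounded by the best approximation error: ‖p_h‖_A ≤ c₂ᴮ ‖u − v_H‖_X for every v_H ∈ X_H. -/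
/-- the discrete multiplier is bounded by the best approximation
error: `‖p_h‖_A ≤ c₂ᴮ ‖u − v_H‖_X` for every `v_H ∈ X_H`. -/
theorem stmt15
    {X Y : Type*} [NormedAddCommGroup X] [InnerProductSpace ℝ X] [CompleteSpace X]
    [NormedAddCommGroup Y] [InnerProductSpace ℝ Y] [CompleteSpace Y]
    (A : Y →L[ℝ] Y →L[ℝ] ℝ)
    (hAsym : ∀ p q : Y, A p q = A q p)
    (μ : ℝ) (hμ : 0 < μ) (hAcoer : ∀ q : Y, μ * ‖q‖ ^ 2 ≤ A q q)
    (B : X →L[ℝ] Y →L[ℝ] ℝ)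
    (c₂B : ℝ) (hc₂B : 0 < c₂B)
    (hBbdd : ∀ (v : X) (q : Y), |B v q| ≤ c₂B * ‖v‖ * Real.sqrt (A q q))
    (X_H : Submodule ℝ X) (Y_h : Submodule ℝ Y)
    (f : Y →L[ℝ] ℝ) (u : X) (hu : ∀ q : Y, B u q = f q)
    (uH : X) (huHmem : uH ∈ X_H) (p_h : Y) (hphmem : p_h ∈ Y_h)
    (h1 : ∀ q_h ∈ Y_h, A p_h q_h + B uH q_h = f q_h)
    (h2 : ∀ v_H ∈ X_H, B v_H p_h = 0) :
    ∀ v_H ∈ X_H, Real.sqrt (A p_h p_h) ≤ c₂B * ‖u - v_H‖ := by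
  intro v_H hvH
  have hApp_nonneg : (0:ℝ) ≤ A p_h p_h :=
    le_trans (by positivity) (hAcoer p_h)
  have hBuH : B uH p_h = 0 := h2 uH huHmem
  have hBvH : B v_H p_h = 0 := h2 v_H hvH
  have key : A p_h p_h = B (u - v_H) p_h := by
    have h1' := h1 p_h hphmem
    have hu' := hu p_h
    simp only [map_sub, ContinuousLinearMap.sub_apply]
    rw [hBvH]
    linarith
  set s := Real.sqrt (A p_h p_h) with hs
  have hs2 : s ^ 2 = A p_h p_h := Real.sq_sqrt hApp_nonneg
  have hbound : A p_h p_h ≤ c₂B * ‖u - v_H‖ * s := by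
    calc A p_h p_h = B (u - v_H) p_h := key
      _ ≤ |B (u - v_H) p_h| := le_abs_self _
      _ ≤ c₂B * ‖u - v_H‖ * s := hBbdd _ _
  rcases eq_or_lt_of_le (Real.sqrt_nonneg (A p_h p_h)) with h0 | h0
  · rw [hs, ← h0]; positivity
  · have : s * s ≤ (c₂B * ‖u - v_H‖) * s := by
      rw [← sq]; rw [hs2]; linarith [hbound]
    exact le_of_mul_le_mul_right (by linarith) h0
end
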